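/- Let G be a finite abelian group, let I be a finite index set, and for each α ∈ I let B_α ⊆ G satisfy |B_α| ≤ ε·|G| for some real ε ∈ (0,1). Let m be a natural number divisible by 3, and suppose |I| · |G| · 2^m · ε^(m/3) < 1. Then there exist r_1, ..., r_m ∈ G such that for every α ∈ I and every u ∈ G, the number of indices i ∈ {1,...,m} with r_i + u ∈ B_α is less than m/3. -/

import Mathlib

/-!
A tuple `r : Fin m → G` is bad for `(α, u)` when at least `m / 3` of its coordinates lie in the
translate `B α - u`. Such tuples are covered by the boxes that put a fixed `m / 3`-set of
coordinates in `B α - u` and leave the others free; there are at most `2 ^ m` boxes, each of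
size at most `ε ^ (m / 3) * |G| ^ m`. A union bound over the `|I| * |G|` pairs `(α, u)` leaves
fewer than `|G| ^ m` bad tuples, so some tuple is good for every pair.
-/

open Finset

section Counting
variable {ι α : Type*} [Fintype ι] [DecidableEq ι] [Fintype α]

lemma card_piFinset_ite_univ (S : Finset ι) (A : Finset α) :
    #(Fintype.piFinset fun i => if i ∈ S then A else univ)
      = #A ^ #S * Fintype.card α ^ (Fintype.card ι - #S) := by
  simp only [Fintype.card_piFinset, apply_ite card, card_univ]
  rw [prod_ite, prod_const, prod_const, filter_mem_eq_inter, univ_inter, filter_not,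
    filter_mem_eq_inter, univ_inter, card_univ_sdiff]

variable [DecidableEq α]

lemma card_filter_many_mem_le (A : Finset α) (k : ℕ) :
    #{r : ι → α | k ≤ #{i | r i ∈ A}}
      ≤ (Fintype.card ι).choose k * #A ^ k * Fintype.card α ^ (Fintype.card ι - k) := by
  have hcover : ({r : ι → α | k ≤ #{i | r i ∈ A}} : Finset (ι → α)) ⊆
      (powersetCard k univ).biUnion fun S =>
        Fintype.piFinset fun i => if i ∈ S then A else univ := by
    intro r hr
    obtain ⟨S, hS, hSk⟩ := exists_subset_card_eq (mem_filter.mp hr).2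
    refine mem_biUnion.mpr
      ⟨S, mem_powersetCard_univ.mpr hSk, Fintype.mem_piFinset.mpr fun i => ?_⟩
    split_ifs with hi
    · exact (mem_filter.mp (hS hi)).2
    · exact mem_univ _
  calc _ ≤ _ := card_le_card hcover
    _ ≤ ∑ S ∈ powersetCard k univ, #A ^ k * Fintype.card α ^ (Fintype.card ι - k) :=
        card_biUnion_le.trans_eq <| sum_congr rfl fun S hS => by
          rw [card_piFinset_ite_univ, mem_powersetCard_univ.mp hS]
    _ = _ := by rw [sum_const, card_powersetCard, card_univ, smul_eq_mul, mul_assoc]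

lemma card_filter_many_mem_le_of_density {ε : ℝ} {A : Finset α}
    (hA : (#A : ℝ) ≤ ε * Fintype.card α) {k : ℕ} (hk : k ≤ Fintype.card ι) :
    (#{r : ι → α | k ≤ #{i | r i ∈ A}} : ℝ)
      ≤ 2 ^ Fintype.card ι * ε ^ k * Fintype.card α ^ Fintype.card ι := by
  set n := Fintype.card ι
  calc (#{r : ι → α | k ≤ #{i | r i ∈ A}} : ℝ)
      ≤ (n.choose k * #A ^ k * Fintype.card α ^ (n - k) : ℕ) := by
        exact_mod_cast card_filter_many_mem_le A k
    _ ≤ 2 ^ n * (ε * Fintype.card α) ^ k * Fintype.card α ^ (n - k) := by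
        push_cast
        gcongr
        · exact_mod_cast n.choose_le_two_pow k
    _ = 2 ^ n * ε ^ k * Fintype.card α ^ n := by
        have hsplit :
            (Fintype.card α : ℝ) ^ k * Fintype.card α ^ (n - k) = Fintype.card α ^ n := by
          rw [← pow_add, Nat.add_sub_cancel' hk]
        rw [mul_pow, ← hsplit]; ring

lemma exists_forall_card_filter_mem_lt [Nonempty α] {J : Type*} [Fintype J] {ε : ℝ}
    (A : J → Finset α) (hA : ∀ j, (#(A j) : ℝ) ≤ ε * Fintype.card α) {k : ℕ}
    (hk : k ≤ Fintype.card ι) (hsmall : Fintype.card J * 2 ^ Fintype.card ι * ε ^ k < 1) :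
    ∃ r : ι → α, ∀ j, #{i | r i ∈ A j} < k := by
  set n := Fintype.card ι
  set bad : J → Finset (ι → α) := fun j => {r | k ≤ #{i | r i ∈ A j}}
  have hunion : (#(univ.biUnion bad) : ℝ) < #(univ : Finset (ι → α)) := calc
    (#(univ.biUnion bad) : ℝ) ≤ ∑ j, (#(bad j) : ℝ) := by exact_mod_cast card_biUnion_le
    _ ≤ ∑ _j : J, 2 ^ n * ε ^ k * Fintype.card α ^ n :=
        sum_le_sum fun j _ => card_filter_many_mem_le_of_density (hA j) hk
    _ = Fintype.card J * 2 ^ n * ε ^ k * Fintype.card α ^ n := by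
        rw [sum_const, card_univ, nsmul_eq_mul]; ring
    _ < Fintype.card α ^ n := mul_lt_of_lt_one_left (by positivity) hsmall
    _ = #(univ : Finset (ι → α)) := by simp [n]
  obtain ⟨r, -, hr⟩ := exists_mem_notMem_of_card_lt_card (by exact_mod_cast hunion)
  exact ⟨r, fun j => not_le.mp fun h =>
    hr (mem_biUnion.mpr ⟨j, mem_univ _, mem_filter.mpr ⟨mem_univ _, h⟩⟩)⟩

end Counting

theorem xor_trick_shifts_general (G : Type*) [AddCommGroup G] [Fintype G] [DecidableEq G]
    (I : Type*) [Fintype I] (B : I → Finset G) (ε : ℝ)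
    (hB : ∀ α : I, ((B α).card : ℝ) ≤ ε * Fintype.card G)
    (m : ℕ)
    (hsmall : (Fintype.card I : ℝ) * (Fintype.card G) * 2 ^ m * ε ^ (m / 3) < 1) :
    ∃ r : Fin m → G, ∀ α : I, ∀ u : G,
      3 * (Finset.univ.filter (fun i : Fin m => r i + u ∈ B α)).card < m := by
  obtain ⟨r, hr⟩ := exists_forall_card_filter_mem_lt (ι := Fin m)
    (fun p : I × G => (B p.1).map (Equiv.subRight p.2).toEmbedding)
    (fun p => by simpa using hB p.1) (by simpa using Nat.div_le_self m 3)
    (by simpa using hsmall)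
  refine ⟨r, fun α u => ?_⟩
  have := hr (α, u)
  simp only [mem_map_equiv, Equiv.subRight_symm_apply] at this
  omega

/-- Lautemann-style XOR trick: if each bad set `B_α` has density at most `ε` and
`|I| · |G| · 2^m · ε^(m/3) < 1`, then there are shifts `r_1, …, r_m` such that for
every `α` and every `u`, fewer than `m/3` of the shifted points `r_i + u` land in
`B_α`. -/
theorem xor_trick_shifts (G : Type*) [AddCommGroup G] [Fintype G] [DecidableEq G]
    (I : Type*) [Fintype I] (B : I → Finset G) (ε : ℝ)
    (hε0 : 0 < ε) (hε1 : ε < 1)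
    (hB : ∀ α : I, ((B α).card : ℝ) ≤ ε * Fintype.card G)
    (m : ℕ) (hm3 : 3 ∣ m)
    (hsmall : (Fintype.card I : ℝ) * (Fintype.card G) * 2 ^ m * ε ^ (m / 3) < 1) :
    ∃ r : Fin m → G, ∀ α : I, ∀ u : G,
      3 * (Finset.univ.filter (fun i : Fin m => r i + u ∈ B α)).card < m :=
  xor_trick_shifts_general G I B ε hB m hsmall
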